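/- arXiv:2501.06630 — 2 statements merged into one kernel-verified Lean document; each statement's English description precedes it below -/
import Mathlib

section
/- Let μ be a discrete growth rate with μ_{n+1}/μ_n ≤ θ for all n and some θ ≥ 1, and let {A_n}_{n≥1} be invertible linear operators on ℝ^d with ‖Φ_A(m,k)‖ ≤ K(μ_m/μ_k)^a for m ≥ k and ‖Φ_A(m,k)‖ ≤ K(μ_k/μ_m)^a for m ≤ k, for some K, a > 0. Let g_n : ℝ^d → ℝ^d be C¹ maps with g_n(0)=0, Dg_n(0)=0, and ‖Dg_n(x)‖ ≤ M μ'_n/μ_n for all n and x, for some M > 0, and assume each A_n+g_n is a homeomorphism. Then the nonlinear evolution 𝒢 satisfies ‖D𝒢(m,n)(x)‖ ≤ K (μ_m/μ_n)^{a+KMθ} for all m ≥ n ≥ 1 and all x ∈ ℝ^d. -/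
noncomputable section

open Filter Metric Set Topology

variable {X : Type*} [NormedAddCommGroup X] [NormedSpace ℝ X]

/-- A discrete growth rate: strictly increasing, `μ 0 = 1`, `μ n → ∞`. -/
def IsGrowthRate (μ : ℕ → ℝ) : Prop :=
  StrictMono μ ∧ μ 0 = 1 ∧ Filter.Tendsto μ Filter.atTop Filter.atTop

/-- The piecewise linear extension `μ̃` of a growth rate. -/
def tildeExt (μ : ℕ → ℝ) (t : ℝ) : ℝ :=
  μ ⌊t⌋₊ + (t - (⌊t⌋₊ : ℝ)) * (μ (⌊t⌋₊ + 1) - μ ⌊t⌋₊)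

/-- `⌊μ̃⁻¹ t⌋`, i.e. the largest `n` with `μ n ≤ t` (for `t ≥ 1`). -/
def floorInvTilde (μ : ℕ → ℝ) (t : ℝ) : ℕ := sSup {n : ℕ | μ n ≤ t}

/-- `⌊μ̃⁻¹ (η (k-1))⌋ + 1`. -/
def idxQ (μ η : ℕ → ℝ) (k : ℕ) : ℕ := floorInvTilde μ (η (k - 1)) + 1

def evolFwd (A : ℕ → X →L[ℝ] X) (k : ℕ) : ℕ → X →L[ℝ] X
  | 0 => ContinuousLinearMap.id ℝ X
  | n + 1 => (A (k + n)).comp (evolFwd A k n)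

/-- The evolution family `Φ_A(m,k) = A_{m-1} ∘ ⋯ ∘ A_k` for `m ≥ k`. -/
def evol (A : ℕ → X →L[ℝ] X) (m k : ℕ) : X →L[ℝ] X := evolFwd A k (m - k)

def evolFwdE (A : ℕ → X ≃L[ℝ] X) (k : ℕ) : ℕ → X ≃L[ℝ] X
  | 0 => ContinuousLinearEquiv.refl ℝ X
  | n + 1 => (evolFwdE A k n).trans (A (k + n))

/-- Two-sided evolution family of a sequence of invertible operators:
`Φ_A(m,k) = A_{m-1}⋯A_k` for `m > k`, `Id` for `m = k`, `A_m⁻¹⋯A_{k-1}⁻¹` for `m < k`. -/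
def evolEquiv (A : ℕ → X ≃L[ℝ] X) (m k : ℕ) : X ≃L[ℝ] X :=
  if k ≤ m then evolFwdE A k (m - k) else (evolFwdE A m (k - m)).symm

def evolE (A : ℕ → X ≃L[ℝ] X) (m k : ℕ) : X →L[ℝ] X := (evolEquiv A m k : X →L[ℝ] X)

/-- The time-rescaled sequence `Q_n^{μ,η} = Φ_A(⌊μ̃⁻¹(η n)⌋+1, ⌊μ̃⁻¹(η (n-1))⌋+1)`. -/
def Qseq (A : ℕ → X →L[ℝ] X) (μ η : ℕ → ℝ) (n : ℕ) : X →L[ℝ] X :=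
  evol A (idxQ μ η (n + 1)) (idxQ μ η n)

def QseqE (A : ℕ → X ≃L[ℝ] X) (μ η : ℕ → ℝ) (n : ℕ) : X ≃L[ℝ] X :=
  evolEquiv A (idxQ μ η (n + 1)) (idxQ μ η n)

/-- A sequence of norms on `X`. -/
def IsNormFamily (Nrm : ℕ → X → ℝ) : Prop :=
  ∀ k, (∀ x y : X, Nrm k (x + y) ≤ Nrm k x + Nrm k y) ∧
    (∀ (c : ℝ) (x : X), Nrm k (c • x) = |c| * Nrm k x) ∧
    (∀ x : X, Nrm k x = 0 → x = 0)

/-- Each norm in the family is equivalent to the ambient norm. -/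
def NormsEquivalent (Nrm : ℕ → X → ℝ) : Prop :=
  ∀ k, ∃ α β : ℝ, 0 < α ∧ 0 < β ∧ ∀ x : X, α * ‖x‖ ≤ Nrm k x ∧ Nrm k x ≤ β * ‖x‖

/-- (od1)–(od2): a sequence of projections compatible with the dynamics, such that the
restriction of `A k` to `Ker P k` is an isomorphism onto `Ker P (k+1)`. -/
def ProjectionsCompat (A P : ℕ → X →L[ℝ] X) : Prop :=
  (∀ k, 1 ≤ k → (P k).comp (P k) = P k) ∧
  (∀ k, 1 ≤ k → (A k).comp (P k) = (P (k + 1)).comp (A k)) ∧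
  (∀ k, 1 ≤ k → Set.BijOn (⇑(A k)) {x : X | P k x = 0} {x : X | P (k + 1) x = 0})

/-- μ-dichotomy with respect to a sequence of norms, relative to given projections.
For `m ≤ k`, `Φ_A(m,k)(Id - P_k)x` denotes the unique `z ∈ Ker P_m` with
`Φ_A(k,m) z = (Id - P_k) x`. -/
def MuDichotomyNormsWith (μ : ℕ → ℝ) (A P : ℕ → X →L[ℝ] X) (Nrm : ℕ → X → ℝ) : Prop :=
  ProjectionsCompat A P ∧
  ∃ N ν : ℝ, 1 ≤ N ∧ 0 < ν ∧
    (∀ k m : ℕ, 1 ≤ k → k ≤ m → ∀ x : X,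
      Nrm m (evol A m k (P k x)) ≤ N * (μ m / μ k) ^ (-ν) * Nrm k x) ∧
    (∀ m k : ℕ, 1 ≤ m → m ≤ k → ∀ x z : X, P m z = 0 → evol A k m z = x - P k x →
      Nrm m z ≤ N * (μ k / μ m) ^ (-ν) * Nrm k x)

/-- Ordinary dichotomy with respect to a sequence of norms, relative to given projections. -/
def OrdinaryDichotomyNormsWith (A P : ℕ → X →L[ℝ] X) (Nrm : ℕ → X → ℝ) : Prop :=
  ProjectionsCompat A P ∧
  ∃ K : ℝ, 1 ≤ K ∧
    (∀ k m : ℕ, 1 ≤ k → k ≤ m → ∀ x : X, Nrm m (evol A m k (P k x)) ≤ K * Nrm k x) ∧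
    (∀ m k : ℕ, 1 ≤ m → m ≤ k → ∀ x z : X, P m z = 0 → evol A k m z = x - P k x →
      Nrm m z ≤ K * Nrm k x)

/-- μ-dichotomy (with respect to a sequence of norms) of a system of invertible operators. -/
def MuDichotomyNormsE (μ : ℕ → ℝ) (A : ℕ → X ≃L[ℝ] X) (Nrm : ℕ → X → ℝ) : Prop :=
  ∃ P : ℕ → X →L[ℝ] X,
    (∀ k, 1 ≤ k → (P k).comp (P k) = P k) ∧
    (∀ k, 1 ≤ k → ((A k : X →L[ℝ] X)).comp (P k) = (P (k + 1)).comp ((A k : X →L[ℝ] X))) ∧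
    (∀ k, 1 ≤ k → Set.BijOn (⇑(A k)) {x : X | P k x = 0} {x : X | P (k + 1) x = 0}) ∧
    ∃ N ν : ℝ, 1 ≤ N ∧ 0 < ν ∧
      (∀ k m : ℕ, 1 ≤ k → k ≤ m → ∀ x : X,
        Nrm m (evolE A m k (P k x)) ≤ N * (μ m / μ k) ^ (-ν) * Nrm k x) ∧
      (∀ m k : ℕ, 1 ≤ m → m ≤ k → ∀ x : X,
        Nrm m (evolE A m k (x - P k x)) ≤ N * (μ k / μ m) ^ (-ν) * Nrm k x)

/-- μ-dichotomy with respect to the original norm. -/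
def MuDichotomy (μ : ℕ → ℝ) (B : ℕ → X →L[ℝ] X) : Prop :=
  ∃ P : ℕ → X →L[ℝ] X, MuDichotomyNormsWith μ B P fun _ x => ‖x‖

/-- The scaled system `Ã_n = (μ_{n+1}/μ_n)^{-λ} A_n`. -/
def scaledSys (μ : ℕ → ℝ) (A : ℕ → X ≃L[ℝ] X) (l : ℝ) (n : ℕ) : X →L[ℝ] X :=
  ((μ (n + 1) / μ n) ^ (-l)) • (A n : X →L[ℝ] X)

/-- The generalized dichotomy spectrum `Σ_{μD,𝔸}`. -/
def muSpectrum (μ : ℕ → ℝ) (A : ℕ → X ≃L[ℝ] X) : Set ℝ :=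
  {l : ℝ | ¬ MuDichotomy μ (scaledSys μ A l)}

/-- The exponential growth rate `n ↦ e^n`. -/
def expRate : ℕ → ℝ := fun n => Real.exp n

/-- `Σ_{ED,ℚ}`: the Sacker–Sell spectrum of the time-rescaled system. -/
def expSpectrumQ (μ : ℕ → ℝ) (A : ℕ → X ≃L[ℝ] X) : Set ℝ :=
  {l : ℝ | ¬ MuDichotomy expRate fun n => Real.exp (-l) • (QseqE A μ expRate n : X →L[ℝ] X)}

/-- `f` is a homeomorphism. -/
def IsHomeoOf {Y : Type*} [TopologicalSpace Y] (f : Y → Y) : Prop :=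
  ∃ h : Y ≃ₜ Y, ∀ x, h x = f x

/-- The perturbed maps `x ↦ A_n x + g_n x`. -/
def pert (A : ℕ → X ≃L[ℝ] X) (g : ℕ → X → X) (n : ℕ) : X → X := fun x => A n x + g n x

def nlFwd (F : ℕ → X → X) (n : ℕ) : ℕ → X → X
  | 0 => id
  | j + 1 => F (n + j) ∘ nlFwd F n j

/-- Nonlinear evolution `𝒢(m,n) = (A_{m-1}+g_{m-1})∘⋯∘(A_n+g_n)` for `m ≥ n`. -/
def nlEvol (A : ℕ → X ≃L[ℝ] X) (g : ℕ → X → X) (m n : ℕ) : X → X := nlFwd (pert A g) n (m - n)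

def nlBwd (F : ℕ → X → X) (m : ℕ) : ℕ → X → X
  | 0 => id
  | j + 1 => nlBwd F m j ∘ Function.invFun (F (m + j))

/-- Nonlinear evolution `𝒢(m,n) = (A_m+g_m)⁻¹∘⋯∘(A_{n-1}+g_{n-1})⁻¹` for `m ≤ n`. -/
def nlEvolBwd (A : ℕ → X ≃L[ℝ] X) (g : ℕ → X → X) (m n : ℕ) : X → X :=
  nlBwd (pert A g) m (n - m)

/-- The rescaled nonlinearities `f_n`. -/
def fSeq (A : ℕ → X ≃L[ℝ] X) (g : ℕ → X → X) (μ : ℕ → ℝ) (n : ℕ) (x : X) : X :=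
  ∑ j ∈ Finset.Icc (floorInvTilde μ (expRate (n - 1)) + 1) (floorInvTilde μ (expRate n)),
    evolE A (floorInvTilde μ (expRate n) + 1) (j + 1)
      (g j (nlEvol A g j (floorInvTilde μ (expRate (n - 1)) + 1) x))

/-- The class `𝒪_μ^k`, with constant `M`. -/
def InOmegaMu (μ : ℕ → ℝ) (k : ℕ) (f : ℕ → X → X) (M : ℝ) : Prop :=
  (∀ n, ContDiff ℝ (k : ℕ∞) (f n)) ∧ (∀ n, f n 0 = 0) ∧ (∀ n, fderiv ℝ (f n) 0 = 0) ∧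
  ∀ n, 1 ≤ n → ∀ x : X, ∀ j : ℕ, j ≤ k →
    ‖iteratedFDeriv ℝ j (f n) x‖ ≤ M * (μ (n + 1) - μ n) / μ n


namespace NlAux

variable {X : Type*} [NormedAddCommGroup X] [NormedSpace ℝ X]

lemma nlEvol_self (A : ℕ → X ≃L[ℝ] X) (g : ℕ → X → X) (n : ℕ) :
    nlEvol A g n n = id := by
  simp [nlEvol, nlFwd]

lemma nlEvol_succ (A : ℕ → X ≃L[ℝ] X) (g : ℕ → X → X) {m n : ℕ} (h : n ≤ m) :
    nlEvol A g (m + 1) n = pert A g m ∘ nlEvol A g m n := by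
  unfold nlEvol
  rw [Nat.succ_sub h]
  show nlFwd (pert A g) n (m - n + 1) = _
  rw [show nlFwd (pert A g) n (m - n + 1) = pert A g (n + (m - n)) ∘ nlFwd (pert A g) n (m - n) from rfl,
    Nat.add_sub_cancel' h]

lemma evolE_self (A : ℕ → X ≃L[ℝ] X) (m : ℕ) :
    evolE A m m = ContinuousLinearMap.id ℝ X := by
  simp [evolE, evolEquiv, Nat.sub_self, evolFwdE]

lemma evolE_succ (A : ℕ → X ≃L[ℝ] X) {m k : ℕ} (h : k ≤ m) :
    evolE A (m + 1) k = (A m : X →L[ℝ] X) ∘L evolE A m k := by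
  unfold evolE evolEquiv
  rw [if_pos (h.trans m.le_succ), if_pos h, Nat.succ_sub h]
  show ((evolFwdE A k (m - k)).trans (A (k + (m - k))) : X →L[ℝ] X) = _
  rw [Nat.add_sub_cancel' h]
  ext x
  simp

lemma pert_differentiable (A : ℕ → X ≃L[ℝ] X) (g : ℕ → X → X)
    (hg : ∀ n, Differentiable ℝ (g n)) (n : ℕ) :
    Differentiable ℝ (pert A g n) := by
  have : pert A g n = fun x => (A n : X →L[ℝ] X) x + g n x := rfl
  rw [this]
  exact ((A n : X →L[ℝ] X)).differentiable.add (hg n)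

lemma pert_fderiv (A : ℕ → X ≃L[ℝ] X) (g : ℕ → X → X)
    (hg : ∀ n, Differentiable ℝ (g n)) (n : ℕ) (y : X) :
    fderiv ℝ (pert A g n) y = (A n : X →L[ℝ] X) + fderiv ℝ (g n) y := by
  have : pert A g n = fun x => (A n : X →L[ℝ] X) x + g n x := rfl
  rw [this, fderiv_fun_add (((A n : X →L[ℝ] X)).differentiableAt) ((hg n).differentiableAt),
    ContinuousLinearMap.fderiv]

lemma nlEvol_differentiable (A : ℕ → X ≃L[ℝ] X) (g : ℕ → X → X)
    (hg : ∀ n, Differentiable ℝ (g n)) (m n : ℕ) :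
    Differentiable ℝ (nlEvol A g m n) := by
  unfold nlEvol
  generalize m - n = j
  induction j with
  | zero => exact differentiable_id
  | succ j ih =>
    exact (pert_differentiable A g hg (n + j)).comp ih

lemma nlEvol_fderiv_formula (A : ℕ → X ≃L[ℝ] X) (g : ℕ → X → X)
    (hg : ∀ n, Differentiable ℝ (g n)) {m n : ℕ} (h : n ≤ m) (x : X) :
    fderiv ℝ (nlEvol A g m n) x =
      evolE A m n + ∑ j ∈ Finset.Ico n m,
        (evolE A m (j+1)) ∘L ((fderiv ℝ (g j) (nlEvol A g j n x)) ∘L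
          (fderiv ℝ (nlEvol A g j n) x)) := by
  induction m, h using Nat.le_induction with
  | base => rw [nlEvol_self]; simp [evolE_self, fderiv_id]
  | succ m hm ih =>
    rw [nlEvol_succ A g hm,
      fderiv_comp x ((pert_differentiable A g hg m) _)
        ((nlEvol_differentiable A g hg m n) x),
      pert_fderiv A g hg m, ContinuousLinearMap.add_comp]
    have h1 : (A m : X →L[ℝ] X) ∘L evolE A m n = evolE A (m+1) n :=
      (evolE_succ A hm).symm
    have h2 : (A m : X →L[ℝ] X) ∘L
        (∑ j ∈ Finset.Ico n m, (evolE A m (j+1)) ∘L ((fderiv ℝ (g j) (nlEvol A g j n x)) ∘L (fderiv ℝ (nlEvol A g j n) x)))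
        = ∑ j ∈ Finset.Ico n m, (evolE A (m+1) (j+1)) ∘L ((fderiv ℝ (g j) (nlEvol A g j n x)) ∘L (fderiv ℝ (nlEvol A g j n) x)) := by
      rw [ContinuousLinearMap.comp_finset_sum]
      refine Finset.sum_congr rfl fun j hj => ?_
      rw [← ContinuousLinearMap.comp_assoc, ← evolE_succ A (Finset.mem_Ico.mp hj).2]
    have h3 : (evolE A (m+1) (m+1)) ∘L ((fderiv ℝ (g m) (nlEvol A g m n x)) ∘L (fderiv ℝ (nlEvol A g m n) x))
        = (fderiv ℝ (g m) (nlEvol A g m n x)) ∘L (fderiv ℝ (nlEvol A g m n) x) := by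
      rw [evolE_self, ContinuousLinearMap.id_comp]
    have hAmD : (A m : X →L[ℝ] X) ∘L fderiv ℝ (nlEvol A g m n) x
        = evolE A (m+1) n + ∑ j ∈ Finset.Ico n m, (evolE A (m+1) (j+1)) ∘L ((fderiv ℝ (g j) (nlEvol A g j n x)) ∘L (fderiv ℝ (nlEvol A g j n) x)) := by
      rw [ih, ContinuousLinearMap.comp_add, h1, h2]
    rw [hAmD, Finset.sum_Ico_succ_top hm, h3]
    abel

lemma prod_one_add_telescope (c : ℕ → ℝ) {n m : ℕ} (h : n ≤ m) :
    1 + ∑ j ∈ Finset.Ico n m, c j * ∏ i ∈ Finset.Ico n j, (1 + c i)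
      = ∏ j ∈ Finset.Ico n m, (1 + c j) := by
  induction m, h using Nat.le_induction with
  | base => simp
  | succ m hm ih =>
    rw [Finset.sum_Ico_succ_top hm, Finset.prod_Ico_succ_top hm, ← ih]
    ring

end NlAux

open NlAux in
/-- bound on the derivative of the nonlinear evolution `𝒢`. -/
theorem nlEvol_fderiv_bound {d : ℕ}
    (μ : ℕ → ℝ) (hμ : IsGrowthRate μ) (θ : ℝ) (hθ : 1 ≤ θ)
    (hμr : ∀ n, μ (n + 1) / μ n ≤ θ)
    (A : ℕ → EuclideanSpace ℝ (Fin d) ≃L[ℝ] EuclideanSpace ℝ (Fin d))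
    (K a : ℝ) (hK : 0 < K) (ha : 0 < a)
    (hfwd : ∀ k m : ℕ, 1 ≤ k → k ≤ m → ‖evolE A m k‖ ≤ K * (μ m / μ k) ^ a)
    (hbwd : ∀ m k : ℕ, 1 ≤ m → m ≤ k → ‖evolE A m k‖ ≤ K * (μ k / μ m) ^ a)
    (g : ℕ → EuclideanSpace ℝ (Fin d) → EuclideanSpace ℝ (Fin d)) (M : ℝ) (hM : 0 < M)
    (hg : ∀ n, ContDiff ℝ 1 (g n)) (hg0 : ∀ n, g n 0 = 0)
    (hgd0 : ∀ n, fderiv ℝ (g n) 0 = 0)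
    (hgd : ∀ n, 1 ≤ n → ∀ x, ‖fderiv ℝ (g n) x‖ ≤ M * ((μ (n + 1) - μ n) / μ n))
    (hhom : ∀ n, 1 ≤ n → IsHomeoOf (pert A g n)) :
    ∀ m n : ℕ, 1 ≤ n → n ≤ m → ∀ x,
      ‖fderiv ℝ (nlEvol A g m n) x‖ ≤ K * (μ m / μ n) ^ (a + K * M * θ) := by
  obtain ⟨hmono, hμ0, -⟩ := hμ
  have hgdiff : ∀ n, Differentiable ℝ (g n) := fun n => (hg n).differentiable one_ne_zero
  have hμpos : ∀ k, (0:ℝ) < μ k := by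
    intro k
    have h1 : μ 0 ≤ μ k := hmono.monotone (Nat.zero_le k)
    rw [hμ0] at h1; linarith
  have hμlt : ∀ k, μ k < μ (k+1) := fun k => hmono (Nat.lt_succ_self k)
  intro m n hn hmn x
  set c : ℕ → ℝ := fun j => K * M * ((μ (j+1) - μ j) / μ j) with hcdef
  have hc : ∀ j, 0 ≤ c j := fun j =>
    mul_nonneg (mul_nonneg hK.le hM.le)
      (div_nonneg (by linarith [hμlt j]) (hμpos j).le)
  have hBnn : ∀ s : Finset ℕ, (0:ℝ) ≤ ∏ i ∈ s, (1 + c i) :=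
    fun s => Finset.prod_nonneg fun i _ => by linarith [hc i]
  -- Gronwall-type bound
  have key : ∀ m, n ≤ m → ∀ y,
      ‖fderiv ℝ (nlEvol A g m n) y‖ ≤
        K * (μ m / μ n) ^ a * ∏ j ∈ Finset.Ico n m, (1 + c j) := by
    intro m
    induction m using Nat.strong_induction_on with
    | _ m IH =>
      intro hm y
      rw [nlEvol_fderiv_formula A g hgdiff hm y]
      have hsum : ‖∑ j ∈ Finset.Ico n m,
            (evolE A m (j+1)) ∘L ((fderiv ℝ (g j) (nlEvol A g j n y)) ∘L
              (fderiv ℝ (nlEvol A g j n) y))‖ ≤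
          ∑ j ∈ Finset.Ico n m,
            (K * (μ m / μ n) ^ a) * (c j * ∏ i ∈ Finset.Ico n j, (1 + c i)) := by
        refine (norm_sum_le _ _).trans (Finset.sum_le_sum fun j hj => ?_)
        obtain ⟨hnj, hjm⟩ := Finset.mem_Ico.mp hj
        have t1 : ‖evolE A m (j+1)‖ ≤ K * (μ m / μ (j+1)) ^ a :=
          hfwd (j+1) m (Nat.succ_le_succ (Nat.zero_le j)) hjm
        have t2 : ‖fderiv ℝ (g j) (nlEvol A g j n y)‖ ≤ M * ((μ (j+1) - μ j) / μ j) :=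
          hgd j (hn.trans hnj) _
        have t3 := IH j hjm hnj y
        have hr : (μ m / μ (j+1)) ^ a * (μ j / μ n) ^ a ≤ (μ m / μ n) ^ a := by
          rw [← Real.mul_rpow (div_nonneg (hμpos m).le (hμpos (j+1)).le)
            (div_nonneg (hμpos j).le (hμpos n).le)]
          refine Real.rpow_le_rpow
            (mul_nonneg (div_nonneg (hμpos m).le (hμpos (j+1)).le)
              (div_nonneg (hμpos j).le (hμpos n).le)) ?_ ha.le
          rw [div_mul_div_comm,
            div_le_div_iff₀ (mul_pos (hμpos (j+1)) (hμpos n)) (hμpos n)]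
          nlinarith [mul_le_mul_of_nonneg_right
            (mul_le_mul_of_nonneg_left (hμlt j).le (hμpos m).le) (hμpos n).le]
        calc ‖(evolE A m (j+1)) ∘L ((fderiv ℝ (g j) (nlEvol A g j n y)) ∘L
                (fderiv ℝ (nlEvol A g j n) y))‖
            ≤ ‖evolE A m (j+1)‖ * (‖fderiv ℝ (g j) (nlEvol A g j n y)‖ *
                ‖fderiv ℝ (nlEvol A g j n) y‖) :=
              (ContinuousLinearMap.opNorm_comp_le _ _).trans
                (by gcongr; exact ContinuousLinearMap.opNorm_comp_le _ _)
          _ ≤ (K * (μ m / μ (j+1)) ^ a) * ((M * ((μ (j+1) - μ j) / μ j)) *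
                (K * (μ j / μ n) ^ a * ∏ i ∈ Finset.Ico n j, (1 + c i))) := by
              gcongr
              · exact mul_nonneg hK.le
                  (Real.rpow_nonneg (div_nonneg (hμpos m).le (hμpos (j+1)).le) _)
              · exact mul_nonneg hM.le
                  (div_nonneg (by linarith [hμlt j]) (hμpos j).le)
          _ = (K * ((μ m / μ (j+1)) ^ a * (μ j / μ n) ^ a)) *
                (c j * ∏ i ∈ Finset.Ico n j, (1 + c i)) := by
              rw [hcdef]; ring
          _ ≤ (K * (μ m / μ n) ^ a) * (c j * ∏ i ∈ Finset.Ico n j, (1 + c i)) := by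
              have h1 : 0 ≤ c j * ∏ i ∈ Finset.Ico n j, (1 + c i) :=
                mul_nonneg (hc j) (hBnn _)
              gcongr
      calc ‖evolE A m n + ∑ j ∈ Finset.Ico n m,
              (evolE A m (j+1)) ∘L ((fderiv ℝ (g j) (nlEvol A g j n y)) ∘L
                (fderiv ℝ (nlEvol A g j n) y))‖
          ≤ ‖evolE A m n‖ + ∑ j ∈ Finset.Ico n m,
              (K * (μ m / μ n) ^ a) * (c j * ∏ i ∈ Finset.Ico n j, (1 + c i)) :=
            (norm_add_le _ _).trans (add_le_add le_rfl hsum)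
        _ ≤ K * (μ m / μ n) ^ a + ∑ j ∈ Finset.Ico n m,
              (K * (μ m / μ n) ^ a) * (c j * ∏ i ∈ Finset.Ico n j, (1 + c i)) := by
            gcongr; exact hfwd n m hn hm
        _ = K * (μ m / μ n) ^ a *
              (1 + ∑ j ∈ Finset.Ico n m, c j * ∏ i ∈ Finset.Ico n j, (1 + c i)) := by
            rw [mul_add, mul_one, Finset.mul_sum]
        _ = K * (μ m / μ n) ^ a * ∏ j ∈ Finset.Ico n m, (1 + c j) := by
            rw [prod_one_add_telescope c hm]
  -- bound the product by a power
  have hfac : ∀ j, 1 + c j ≤ (μ (j+1) / μ j) ^ (K * M * θ) := by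
    intro j
    set r := μ (j+1) / μ j with hrdef
    have hrpos : (0:ℝ) < r := div_pos (hμpos (j+1)) (hμpos j)
    have hr1 : 1 < r := (one_lt_div (hμpos j)).mpr (hμlt j)
    have hrθ : r ≤ θ := hμr j
    have hlog : 1 - r⁻¹ ≤ Real.log r := by
      have h := Real.log_le_sub_one_of_pos (inv_pos.mpr hrpos)
      rw [Real.log_inv] at h; linarith
    have hlognn : 0 ≤ Real.log r := Real.log_nonneg hr1.le
    have hcr : c j = K * M * (r - 1) := by
      have h0 : c j = K * M * ((μ (j+1) - μ j) / μ j) := rfl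
      rw [h0, sub_div, div_self (hμpos j).ne', hrdef]
    have hinv : (0:ℝ) ≤ 1 - r⁻¹ := by
      nlinarith [mul_nonneg (by linarith : (0:ℝ) ≤ r - 1) (inv_pos.mpr hrpos).le,
        mul_inv_cancel₀ hrpos.ne']
    have h2 : r - 1 ≤ θ * Real.log r := by
      have e1 : r * (1 - r⁻¹) = r - 1 := by
        rw [mul_sub, mul_one, mul_inv_cancel₀ hrpos.ne']
      have e2 : θ * (1 - r⁻¹) ≤ θ * Real.log r :=
        mul_le_mul_of_nonneg_left hlog (by linarith : (0:ℝ) ≤ θ)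
      have e3 : r * (1 - r⁻¹) ≤ θ * (1 - r⁻¹) :=
        mul_le_mul_of_nonneg_right hrθ hinv
      linarith
    rw [Real.rpow_def_of_pos hrpos]
    have h3 : 1 + c j ≤ 1 + K * M * θ * Real.log r := by
      rw [hcr]
      have := mul_le_mul_of_nonneg_left h2 (by positivity : (0:ℝ) ≤ K * M)
      nlinarith
    refine h3.trans ?_
    have := Real.add_one_le_exp (K * M * θ * Real.log r)
    rw [show Real.log r * (K * M * θ) = K * M * θ * Real.log r by ring]
    linarith
  have hprodpow : ∀ m, n ≤ m →
      ∏ j ∈ Finset.Ico n m, (μ (j+1) / μ j) ^ (K * M * θ) = (μ m / μ n) ^ (K * M * θ) := by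
    intro m hm
    induction m, hm using Nat.le_induction with
    | base => rw [Finset.Ico_self, Finset.prod_empty, div_self (hμpos n).ne', Real.one_rpow]
    | succ m hm ih =>
      rw [Finset.prod_Ico_succ_top hm, ih,
        ← Real.mul_rpow (div_nonneg (hμpos m).le (hμpos n).le)
          (div_nonneg (hμpos (m+1)).le (hμpos m).le)]
      congr 1
      rw [div_mul_div_comm, mul_comm (μ n) (μ m), mul_comm (μ m) (μ (m+1)),
        mul_comm (μ m) (μ n)]
      rw [show μ (m+1) * μ m / (μ n * μ m) = μ m * μ (m+1) / (μ m * μ n) by ring]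
      exact mul_div_mul_left _ _ (hμpos m).ne'
  have hprod_le : ∏ j ∈ Finset.Ico n m, (1 + c j) ≤ (μ m / μ n) ^ (K * M * θ) := by
    rw [← hprodpow m hmn]
    exact Finset.prod_le_prod (fun j _ => by linarith [hc j]) (fun j _ => hfac j)
  calc ‖fderiv ℝ (nlEvol A g m n) x‖
      ≤ K * (μ m / μ n) ^ a * ∏ j ∈ Finset.Ico n m, (1 + c j) := key m hmn x
    _ ≤ K * (μ m / μ n) ^ a * (μ m / μ n) ^ (K * M * θ) := by
        have h0 : (0:ℝ) ≤ K * (μ m / μ n) ^ a :=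
          mul_nonneg hK.le (Real.rpow_nonneg (div_nonneg (hμpos m).le (hμpos n).le) _)
        gcongr
    _ = K * (μ m / μ n) ^ (a + K * M * θ) := by
        rw [mul_assoc, ← Real.rpow_add (div_pos (hμpos m) (hμpos n))]

end
end

section
/- In the setting of the preceding statement, assume additionally that ‖Dg_n(x)‖ ≤ c μ'_n/μ_n and ‖Dg_n(x)−Dg_n(y)‖ ≤ M (μ'_n/μ_n)‖x−y‖ for all n and x, y ∈ ℝ^d, and let ã ≥ a be such that ‖D𝒢(m,n)(x)‖ ≤ K(μ_m/μ_n)^{ã} for m ≥ n (so ã = a+KMθ in the setting above, with a corresponding exponent ã for the Lipschitz constants). Then ‖D𝒢(m,n)(x) − D𝒢(m,n)(y)‖ ≤ K³Mθ (μ_m/μ_n)^{2ã+Kcθ} log(μ_m/μ_n) · ‖x−y‖ for all m ≥ n ≥ 1 and x, y ∈ ℝ^d. -/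
noncomputable section

open Filter Metric Set Topology

variable {X : Type*} [NormedAddCommGroup X] [NormedSpace ℝ X]

section AuxProof

variable (A : ℕ → X ≃L[ℝ] X) (g : ℕ → X → X)

lemma nlEvol_self' (n : ℕ) : nlEvol A g n n = id := by
  simp [nlEvol, nlFwd]

lemma clm_comp_sum {ι : Type*} (P : X →L[ℝ] X) (s : Finset ι) (T : ι → X →L[ℝ] X) :
    P.comp (∑ j ∈ s, T j) = ∑ j ∈ s, P.comp (T j) := by
  classical
  induction s using Finset.induction with
  | empty => simp
  | insert _ _ h ih => rw [Finset.sum_insert h, Finset.sum_insert h,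
      ContinuousLinearMap.comp_add, ih]

lemma nlEvol_succ' {m n : ℕ} (h : n ≤ m) :
    nlEvol A g (m + 1) n = pert A g m ∘ nlEvol A g m n := by
  unfold nlEvol
  rw [Nat.succ_sub h]
  show pert A g (n + (m - n)) ∘ nlFwd (pert A g) n (m - n) = _
  rw [Nat.add_sub_cancel' h]

lemma nlEvol_one (m : ℕ) : nlEvol A g (m + 1) m = pert A g m := by
  rw [nlEvol_succ' A g le_rfl, nlEvol_self', Function.comp_id]

variable {g} in
lemma pert_diff (hg : ∀ n, ContDiff ℝ 1 (g n)) (n : ℕ) :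
    Differentiable ℝ (pert A g n) :=
  ((A n).differentiable : Differentiable ℝ fun x => A n x).add
    ((hg n).differentiable one_ne_zero)

variable {g} in
lemma pert_fderiv (hg : ∀ n, ContDiff ℝ 1 (g n)) (n : ℕ) (z : X) :
    fderiv ℝ (pert A g n) z = (A n : X →L[ℝ] X) + fderiv ℝ (g n) z := by
  have h1 : DifferentiableAt ℝ (fun x : X => A n x) z := (A n).differentiableAt
  have h2 : DifferentiableAt ℝ (g n) z := ((hg n).differentiable one_ne_zero) z
  have : fderiv ℝ (fun x : X => A n x + g n x) z
      = fderiv ℝ (fun x : X => A n x) z + fderiv ℝ (g n) z := fderiv_fun_add h1 h2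
  rw [show pert A g n = fun x : X => A n x + g n x from rfl, this, (A n).fderiv]

variable {g} in
lemma nlEvol_diff (hg : ∀ n, ContDiff ℝ 1 (g n)) {n m : ℕ} (h : n ≤ m) :
    Differentiable ℝ (nlEvol A g m n) := by
  induction m, h using Nat.le_induction with
  | base => rw [nlEvol_self']; exact differentiable_id
  | succ m hm ih =>
    rw [nlEvol_succ' A g hm]
    exact (pert_diff A hg m).comp ih

lemma nlEvol_cocycle {n j m : ℕ} (hnj : n ≤ j) (hjm : j ≤ m) (z : X) :
    nlEvol A g m j (nlEvol A g j n z) = nlEvol A g m n z := by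
  induction m, hjm using Nat.le_induction with
  | base => rw [nlEvol_self']; rfl
  | succ m hm ih =>
    rw [nlEvol_succ' A g hm, nlEvol_succ' A g (hnj.trans hm)]
    simp only [Function.comp_apply, ih]

variable {g} in
lemma nlEvol_fderiv_comp' (hg : ∀ n, ContDiff ℝ 1 (g n)) {n j m : ℕ}
    (hnj : n ≤ j) (hjm : j ≤ m) (z : X) :
    fderiv ℝ (nlEvol A g m n) z =
      (fderiv ℝ (nlEvol A g m j) (nlEvol A g j n z)).comp
        (fderiv ℝ (nlEvol A g j n) z) := by
  have hE : nlEvol A g m n = nlEvol A g m j ∘ nlEvol A g j n :=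
    funext fun w => (nlEvol_cocycle A g hnj hjm w).symm
  rw [hE]
  exact fderiv_comp z ((nlEvol_diff A hg hjm) _) ((nlEvol_diff A hg hnj) z)

variable {g} in
/-- Telescoping identity for the difference of derivatives of the nonlinear evolution. -/
lemma nlEvol_fderiv_sub_eq (hg : ∀ n, ContDiff ℝ 1 (g n)) {n m : ℕ} (h : n ≤ m) (x y : X) :
    fderiv ℝ (nlEvol A g m n) x - fderiv ℝ (nlEvol A g m n) y =
      ∑ j ∈ Finset.Ico n m,
        (fderiv ℝ (nlEvol A g m (j + 1)) (nlEvol A g (j + 1) n x)).comp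
          ((fderiv ℝ (g j) (nlEvol A g j n x) - fderiv ℝ (g j) (nlEvol A g j n y)).comp
            (fderiv ℝ (nlEvol A g j n) y)) := by
  induction m, h using Nat.le_induction with
  | base => simp [nlEvol_self']
  | succ m hm ih =>
    rw [Finset.sum_Ico_succ_top hm]
    have hx' : fderiv ℝ (nlEvol A g (m + 1) n) x =
        (fderiv ℝ (pert A g m) (nlEvol A g m n x)).comp (fderiv ℝ (nlEvol A g m n) x) := by
      rw [nlEvol_succ' A g hm]
      exact fderiv_comp x ((pert_diff A hg m) _) ((nlEvol_diff A hg hm) x)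
    have hy' : fderiv ℝ (nlEvol A g (m + 1) n) y =
        (fderiv ℝ (pert A g m) (nlEvol A g m n y)).comp (fderiv ℝ (nlEvol A g m n) y) := by
      rw [nlEvol_succ' A g hm]
      exact fderiv_comp y ((pert_diff A hg m) _) ((nlEvol_diff A hg hm) y)
    set P := fderiv ℝ (pert A g m) (nlEvol A g m n x) with hP
    set Q := fderiv ℝ (pert A g m) (nlEvol A g m n y) with hQ
    set Dx := fderiv ℝ (nlEvol A g m n) x
    set Dy := fderiv ℝ (nlEvol A g m n) y
    have key : fderiv ℝ (nlEvol A g (m + 1) n) x - fderiv ℝ (nlEvol A g (m + 1) n) y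
        = P.comp (Dx - Dy) + (P - Q).comp Dy := by
      rw [hx', hy', ContinuousLinearMap.comp_sub, ContinuousLinearMap.sub_comp]
      abel
    have hPQ : P - Q = fderiv ℝ (g m) (nlEvol A g m n x) - fderiv ℝ (g m) (nlEvol A g m n y) := by
      rw [hP, hQ, pert_fderiv A hg, pert_fderiv A hg]
      abel
    have htop : (P - Q).comp Dy =
        (fderiv ℝ (nlEvol A g (m + 1) (m + 1)) (nlEvol A g (m + 1) n x)).comp
          ((fderiv ℝ (g m) (nlEvol A g m n x) - fderiv ℝ (g m) (nlEvol A g m n y)).comp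
            (fderiv ℝ (nlEvol A g m n) y)) := by
      rw [nlEvol_self', hPQ]
      simp [fderiv_id, ContinuousLinearMap.id_comp]
      rfl
    have hsum : P.comp (Dx - Dy) =
        ∑ j ∈ Finset.Ico n m,
          (fderiv ℝ (nlEvol A g (m + 1) (j + 1)) (nlEvol A g (j + 1) n x)).comp
            ((fderiv ℝ (g j) (nlEvol A g j n x) - fderiv ℝ (g j) (nlEvol A g j n y)).comp
              (fderiv ℝ (nlEvol A g j n) y)) := by
      rw [ih, clm_comp_sum]
      refine Finset.sum_congr rfl fun j hj => ?_
      obtain ⟨hnj, hjm'⟩ := Finset.mem_Ico.mp hj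
      rw [← ContinuousLinearMap.comp_assoc]
      congr 1
      have hcomp := nlEvol_fderiv_comp' A hg (Nat.succ_le_of_lt hjm') (Nat.le_succ m)
        (nlEvol A g (j + 1) n x)
      rw [hcomp, nlEvol_cocycle A g (hnj.trans (Nat.le_succ j)) (Nat.succ_le_of_lt hjm'),
        nlEvol_one A g, hP]
    rw [key, hsum, htop]

end AuxProof

/-- Lipschitz estimate for the derivative of the nonlinear evolution `𝒢`. -/
theorem nlEvol_fderiv_lipschitz {d : ℕ}
    (μ : ℕ → ℝ) (hμ : IsGrowthRate μ) (θ : ℝ) (hθ : 1 ≤ θ)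
    (hμr : ∀ n, μ (n + 1) / μ n ≤ θ)
    (A : ℕ → EuclideanSpace ℝ (Fin d) ≃L[ℝ] EuclideanSpace ℝ (Fin d))
    (K a : ℝ) (hK : 0 < K) (ha : 0 < a)
    (hfwd : ∀ k m : ℕ, 1 ≤ k → k ≤ m → ‖evolE A m k‖ ≤ K * (μ m / μ k) ^ a)
    (g : ℕ → EuclideanSpace ℝ (Fin d) → EuclideanSpace ℝ (Fin d)) (M c : ℝ)
    (hM : 0 < M) (hc : 0 < c)
    (hg : ∀ n, ContDiff ℝ 1 (g n)) (hg0 : ∀ n, g n 0 = 0)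
    (hgd0 : ∀ n, fderiv ℝ (g n) 0 = 0)
    (hgd : ∀ n, 1 ≤ n → ∀ x, ‖fderiv ℝ (g n) x‖ ≤ c * ((μ (n + 1) - μ n) / μ n))
    (hgdlip : ∀ n, 1 ≤ n → ∀ x y,
      ‖fderiv ℝ (g n) x - fderiv ℝ (g n) y‖ ≤ M * ((μ (n + 1) - μ n) / μ n) * ‖x - y‖)
    (hhom : ∀ n, 1 ≤ n → IsHomeoOf (pert A g n))
    (a' : ℝ) (ha' : a ≤ a')
    (hDG : ∀ m n : ℕ, 1 ≤ n → n ≤ m → ∀ x,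
      ‖fderiv ℝ (nlEvol A g m n) x‖ ≤ K * (μ m / μ n) ^ a') :
    ∀ m n : ℕ, 1 ≤ n → n ≤ m → ∀ x y,
      ‖fderiv ℝ (nlEvol A g m n) x - fderiv ℝ (nlEvol A g m n) y‖ ≤
        K ^ 3 * M * θ * (μ m / μ n) ^ (2 * a' + K * c * θ) * Real.log (μ m / μ n) *
          ‖x - y‖ := by
  obtain ⟨hmono, hμ0, -⟩ := hμ
  have hone : ∀ k, 1 ≤ μ k := fun k => hμ0 ▸ hmono.monotone (Nat.zero_le k)
  have hpos : ∀ k, 0 < μ k := fun k => lt_of_lt_of_le one_pos (hone k)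
  have ha'0 : 0 ≤ a' := le_of_lt (lt_of_lt_of_le ha ha')
  have hrat1 : ∀ k l : ℕ, k ≤ l → 1 ≤ μ l / μ k := fun k l hkl =>
    (one_le_div (hpos k)).mpr (hmono.monotone hkl)
  -- Lipschitz bound on the nonlinear evolution, from the derivative bound
  have hLip : ∀ j n : ℕ, 1 ≤ n → n ≤ j → ∀ x y : EuclideanSpace ℝ (Fin d),
      ‖nlEvol A g j n x - nlEvol A g j n y‖ ≤ K * (μ j / μ n) ^ a' * ‖x - y‖ := by
    intro j n h1 hnj x y
    exact Convex.norm_image_sub_le_of_norm_fderiv_le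
      (fun z _ => (nlEvol_diff A hg hnj) z)
      (fun z _ => hDG j n h1 hnj z) convex_univ (Set.mem_univ y) (Set.mem_univ x)
  intro m n h1 hmn x y
  -- telescoping sum of logs
  have htel : ∑ j ∈ Finset.Ico n m, (Real.log (μ (j + 1)) - Real.log (μ j))
      = Real.log (μ m) - Real.log (μ n) := by
    induction m, hmn using Nat.le_induction with
    | base => simp
    | succ m hm ih => rw [Finset.sum_Ico_succ_top hm, ih]; ring
  rw [nlEvol_fderiv_sub_eq A hg hmn x y]
  refine le_trans (norm_sum_le _ _) ?_
  have hterm : ∀ j ∈ Finset.Ico n m,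
      ‖(fderiv ℝ (nlEvol A g m (j + 1)) (nlEvol A g (j + 1) n x)).comp
          ((fderiv ℝ (g j) (nlEvol A g j n x) - fderiv ℝ (g j) (nlEvol A g j n y)).comp
            (fderiv ℝ (nlEvol A g j n) y))‖ ≤
        (K ^ 3 * M * ‖x - y‖ * (μ m / μ n) ^ (2 * a')) *
          (θ * (Real.log (μ (j + 1)) - Real.log (μ j))) := by
    intro j hj
    obtain ⟨hnj, hjm⟩ := Finset.mem_Ico.mp hj
    have h1j : 1 ≤ j := h1.trans hnj
    set p : ℝ := (μ m / μ (j + 1)) ^ a' with hp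
    set q : ℝ := (μ j / μ n) ^ a' with hq
    set r : ℝ := (μ (j + 1) - μ j) / μ j with hr
    have hp0 : 0 ≤ p := Real.rpow_nonneg (div_nonneg (hpos m).le (hpos (j + 1)).le) _
    have hq0 : 0 ≤ q := Real.rpow_nonneg (div_nonneg (hpos j).le (hpos n).le) _
    have hr0 : 0 ≤ r :=
      div_nonneg (by linarith [hmono (Nat.lt_succ_self j)]) (hpos j).le
    -- operator norm bounds
    have b1 : ‖fderiv ℝ (nlEvol A g m (j + 1)) (nlEvol A g (j + 1) n x)‖ ≤ K * p :=
      hDG m (j + 1) (by omega) hjm _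
    have b2 : ‖fderiv ℝ (nlEvol A g j n) y‖ ≤ K * q := hDG j n h1 hnj y
    have b3 : ‖fderiv ℝ (g j) (nlEvol A g j n x) - fderiv ℝ (g j) (nlEvol A g j n y)‖ ≤
        M * r * (K * q * ‖x - y‖) := by
      refine le_trans (hgdlip j h1j _ _) ?_
      exact mul_le_mul_of_nonneg_left (hLip j n h1 hnj x y) (mul_nonneg hM.le hr0)
    have hcombine : ‖(fderiv ℝ (nlEvol A g m (j + 1)) (nlEvol A g (j + 1) n x)).comp
          ((fderiv ℝ (g j) (nlEvol A g j n x) - fderiv ℝ (g j) (nlEvol A g j n y)).comp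
            (fderiv ℝ (nlEvol A g j n) y))‖ ≤
        (K * p) * ((M * r * (K * q * ‖x - y‖)) * (K * q)) := by
      refine le_trans (ContinuousLinearMap.opNorm_comp_le _ _) ?_
      refine mul_le_mul b1 ?_ (norm_nonneg _) (mul_nonneg hK.le hp0)
      refine le_trans (ContinuousLinearMap.opNorm_comp_le _ _) ?_
      exact mul_le_mul b3 b2 (norm_nonneg _)
        (mul_nonneg (mul_nonneg hM.le hr0)
          (mul_nonneg (mul_nonneg hK.le hq0) (norm_nonneg _)))
    refine hcombine.trans ?_
    -- now pure real arithmetic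
    have hpqq : p * q * q ≤ (μ m / μ n) ^ (2 * a') := by
      have hp' : p ≤ (μ m / μ j) ^ a' := by
        refine Real.rpow_le_rpow (div_nonneg (hpos m).le (hpos (j + 1)).le) ?_ ha'0
        rw [div_le_div_iff₀ (hpos (j + 1)) (hpos j)]
        exact mul_le_mul_of_nonneg_left (hmono (Nat.lt_succ_self j)).le (hpos m).le
      have hq' : q ≤ (μ m / μ n) ^ a' := by
        refine Real.rpow_le_rpow (div_nonneg (hpos j).le (hpos n).le) ?_ ha'0
        rw [div_le_div_iff₀ (hpos n) (hpos n)]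
        exact mul_le_mul_of_nonneg_right (hmono.monotone hjm.le) (hpos n).le
      have hmul : (μ m / μ j) ^ a' * q = (μ m / μ n) ^ a' := by
        rw [hq, ← Real.mul_rpow (div_nonneg (hpos m).le (hpos j).le)
          (div_nonneg (hpos j).le (hpos n).le)]
        rw [div_mul_div_comm, mul_comm (μ m) (μ j), mul_div_mul_left _ _ (hpos j).ne']
      calc p * q * q ≤ (μ m / μ j) ^ a' * q * q := by
            refine mul_le_mul_of_nonneg_right (mul_le_mul_of_nonneg_right hp' hq0) hq0
        _ = (μ m / μ n) ^ a' * q := by rw [hmul]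
        _ ≤ (μ m / μ n) ^ a' * (μ m / μ n) ^ a' := by
            refine mul_le_mul_of_nonneg_left hq'
              (Real.rpow_nonneg (div_nonneg (hpos m).le (hpos n).le) _)
        _ = (μ m / μ n) ^ (2 * a') := by
            rw [← Real.rpow_add (div_pos (hpos m) (hpos n)), two_mul]
    have hrθ : r ≤ θ * (Real.log (μ (j + 1)) - Real.log (μ j)) := by
      set s : ℝ := μ (j + 1) / μ j with hs
      have hs1 : 1 ≤ s := hrat1 j (j + 1) (Nat.le_succ j)
      have hs0 : (0 : ℝ) < s := lt_of_lt_of_le one_pos hs1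
      have hsθ : s ≤ θ := hμr j
      have hlog : Real.log s = Real.log (μ (j + 1)) - Real.log (μ j) :=
        Real.log_div (hpos (j + 1)).ne' (hpos j).ne'
      have hrs : r = s - 1 := by
        rw [hr, hs, sub_div, div_self (hpos j).ne']
      have hlogpos : 0 ≤ Real.log s := Real.log_nonneg hs1
      have hinv : 1 - s⁻¹ ≤ Real.log s := Real.one_sub_inv_le_log_of_pos hs0
      have hkey : s - 1 ≤ θ * Real.log s := by
        nlinarith [mul_le_mul_of_nonneg_left hinv hs0.le, mul_inv_cancel₀ hs0.ne']
      rw [hrs, ← hlog]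
      exact hkey
    have e1 : (K * p) * ((M * r * (K * q * ‖x - y‖)) * (K * q))
        = (K ^ 3 * M * ‖x - y‖) * ((p * q * q) * r) := by ring
    have e2 : (K ^ 3 * M * ‖x - y‖ * (μ m / μ n) ^ (2 * a')) *
          (θ * (Real.log (μ (j + 1)) - Real.log (μ j)))
        = (K ^ 3 * M * ‖x - y‖) * ((μ m / μ n) ^ (2 * a') *
            (θ * (Real.log (μ (j + 1)) - Real.log (μ j)))) := by ring
    rw [e1, e2]
    refine mul_le_mul_of_nonneg_left ?_ (by positivity)
    exact mul_le_mul hpqq hrθ hr0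
      (Real.rpow_nonneg (div_nonneg (hpos m).le (hpos n).le) _)
  refine le_trans (Finset.sum_le_sum hterm) ?_
  rw [← Finset.mul_sum, ← Finset.mul_sum, htel]
  -- final comparison
  have hlogdiv : Real.log (μ m / μ n) = Real.log (μ m) - Real.log (μ n) :=
    Real.log_div (hpos m).ne' (hpos n).ne'
  have hlog0 : 0 ≤ Real.log (μ m) - Real.log (μ n) := by
    rw [← hlogdiv]; exact Real.log_nonneg (hrat1 n m hmn)
  have hexp : (μ m / μ n) ^ (2 * a') ≤ (μ m / μ n) ^ (2 * a' + K * c * θ) := by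
    refine Real.rpow_le_rpow_of_exponent_le (hrat1 n m hmn) ?_
    have : 0 ≤ K * c * θ := by positivity
    linarith
  rw [hlogdiv]
  set L : ℝ := Real.log (μ m) - Real.log (μ n)
  have hC0 : 0 ≤ K ^ 3 * M * θ * L * ‖x - y‖ :=
    mul_nonneg (mul_nonneg (mul_nonneg (mul_nonneg (pow_nonneg hK.le 3) hM.le)
      (by linarith : (0 : ℝ) ≤ θ)) hlog0) (norm_nonneg _)
  calc K ^ 3 * M * ‖x - y‖ * (μ m / μ n) ^ (2 * a') * (θ * L)
      = (K ^ 3 * M * θ * L * ‖x - y‖) * ((μ m / μ n) ^ (2 * a')) := by ring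
    _ ≤ (K ^ 3 * M * θ * L * ‖x - y‖) * ((μ m / μ n) ^ (2 * a' + K * c * θ)) :=
        mul_le_mul_of_nonneg_left hexp hC0
    _ = K ^ 3 * M * θ * (μ m / μ n) ^ (2 * a' + K * c * θ) * L * ‖x - y‖ := by ring

end
end
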